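/- arXiv:quant-ph/0303089 — 2 statements merged into one kernel-verified Lean document; each statement's English description precedes it below -/
import Mathlib

section
/- If f : ℕ → ℕ and U is an ultrafilter on ℕ such that f_*(U) = U, then {n : f(n) = n} ∈ U. -/
open Function

/-- Key ultrafilter lemma: if `map g U = U` and there is a `Prop`-coloring `c`
flipped by `g` on a set `T ∈ U`, we get a contradiction. -/
private theorem key_lemma (U : Ultrafilter ℕ) (g : ℕ → ℕ)
    (hmap : U.map g = U) (c : ℕ → Prop) (T : Set ℕ) (hT : T ∈ U)
    (hc : ∀ n ∈ T, ¬ (c (g n) ↔ c n)) : False := by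
  have hiff : ∀ s : Set ℕ, s ∈ U ↔ g ⁻¹' s ∈ U := by
    intro s
    rw [← Ultrafilter.mem_map (m := g) (f := U), hmap]
  rcases U.mem_or_compl_mem {n | c n} with hs | hs
  · have h2 : g ⁻¹' {n | c n} ∈ U := (hiff _).1 hs
    have h3 : T ∩ ({n | c n} ∩ g ⁻¹' {n | c n}) ∈ U := by
      exact Filter.inter_mem hT (Filter.inter_mem hs h2)
    obtain ⟨n, hn1, hn2, hn3⟩ := U.nonempty_of_mem h3
    exact hc n hn1 (iff_of_true hn3 hn2)
  · have h2 : g ⁻¹' {n | c n}ᶜ ∈ U := (hiff _).1 hs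
    have h3 : T ∩ ({n | c n}ᶜ ∩ g ⁻¹' {n | c n}ᶜ) ∈ U := by
      exact Filter.inter_mem hT (Filter.inter_mem hs h2)
    obtain ⟨n, hn1, hn2, hn3⟩ := U.nonempty_of_mem h3
    exact hc n hn1 (iff_of_false hn3 hn2)

/-- Descending coloring: flips along the map `n+1 ↦ (f (n+1) if smaller, else n)`. -/
private def cdown (f : ℕ → ℕ) : ℕ → Bool
  | 0 => false
  | (n+1) => ! cdown f (if f (n+1) < n + 1 then f (n+1) else n)
termination_by n => n
decreasing_by split <;> omega

private theorem cdown_flip (f : ℕ → ℕ) {n : ℕ} (h : f n < n) :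
    cdown f n = ! cdown f (f n) := by
  cases n with
  | zero => omega
  | succ m =>
    rw [cdown]
    simp [Nat.lt_succ_iff.mp h]

section Ascending

variable (g : ℕ → ℕ) (hg : ∀ n, n < g n)
include hg

private theorem iter_sm (x : ℕ) : StrictMono (fun j => g^[j] x) :=
  strictMono_nat_of_lt_succ fun j => by
    simpa [Function.iterate_succ_apply'] using hg (g^[j] x)

/-- uniqueness of parity of meeting exponents -/
private theorem par_aux {x m i j i' j' : ℕ} (hle : i ≤ i')
    (h1 : g^[i] x = g^[j] m) (h2 : g^[i'] x = g^[j'] m) :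
    (i + j) % 2 = (i' + j') % 2 := by
  have key : g^[i' - i + j] m = g^[j'] m := by
    rw [Function.iterate_add_apply, ← h1, ← Function.iterate_add_apply]
    rw [show i' - i + i = i' from by omega]
    exact h2
  have := (iter_sm g hg m).injective key
  omega

private theorem par {x m i j i' j' : ℕ}
    (h1 : g^[i] x = g^[j] m) (h2 : g^[i'] x = g^[j'] m) :
    (i + j) % 2 = (i' + j') % 2 := by
  rcases le_total i i' with hle | hle
  · exact par_aux g hg hle h1 h2
  · exact (par_aux g hg hle h2 h1).symm

/-- the "same component" relation -/
private def SameOrbit (m n : ℕ) : Prop := ∃ i j, g^[i] m = g^[j] n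

omit hg in
private theorem rel_self (n : ℕ) : SameOrbit g n n := ⟨0, 0, rfl⟩

/-- least element of the component -/
private noncomputable def rep (n : ℕ) : ℕ := sInf {m | SameOrbit g m n}

omit hg in
private theorem rep_rel (n : ℕ) : SameOrbit g (rep g n) n :=
  Nat.sInf_mem (⟨n, rel_self g n⟩ : {m | SameOrbit g m n}.Nonempty)

omit hg in
private theorem rep_g (n : ℕ) : rep g (g n) = rep g n := by
  unfold rep
  congr 1
  ext m
  constructor
  · rintro ⟨i, j, hij⟩
    exact ⟨i, j + 1, by rw [Function.iterate_succ_apply, hij]⟩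
  · rintro ⟨i, j, hij⟩
    refine ⟨i + 1, j, ?_⟩
    rw [Function.iterate_succ_apply', hij]
    exact (Function.iterate_succ_apply' g j n).symm.trans (Function.iterate_succ_apply g j n)

/-- the parity coloring -/
private def cup (n : ℕ) : Prop := ∃ i j, g^[i] n = g^[j] (rep g n) ∧ (i + j) % 2 = 0

private theorem cup_iff {n i j : ℕ} (h : g^[i] n = g^[j] (rep g n)) :
    cup g n ↔ (i + j) % 2 = 0 := by
  constructor
  · rintro ⟨i', j', h', hp⟩
    rw [par g hg h h']
    exact hp
  · intro hp
    exact ⟨i, j, h, hp⟩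

private theorem cup_flip (n : ℕ) : ¬ (cup g (g n) ↔ cup g n) := by
  obtain ⟨a, b, hab⟩ := rep_rel g n
  have h1 : g^[b] n = g^[a] (rep g n) := hab.symm
  have h2 : g^[b] (g n) = g^[a + 1] (rep g (g n)) := by
    rw [rep_g g, ← Function.iterate_succ_apply, Function.iterate_succ_apply',
      Function.iterate_succ_apply', h1]
  rw [cup_iff g hg h1, cup_iff g hg h2]
  omega

end Ascending

/-- If the pushforward of an ultrafilter `U` on ℕ along `f` is `U` itself, then
`f` is the identity on a set belonging to `U`. -/
theorem eq_on_ultrafilter_of_map_eq_self (U : Ultrafilter ℕ) (f : ℕ → ℕ)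
    (h : U.map f = U) : {n : ℕ | f n = n} ∈ U := by
  by_contra hcon
  have hne : {n : ℕ | f n ≠ n} ∈ U := (Ultrafilter.compl_mem_iff_notMem).2 hcon
  have hsub : {n : ℕ | f n ≠ n} ⊆ {n | n < f n} ∪ {n | f n < n} := by
    intro n hn; simp only [Set.mem_setOf_eq, Set.mem_union] at *; omega
  rcases Ultrafilter.union_mem_iff.1 (Filter.mem_of_superset hne hsub) with hA | hB
  · -- ascending case
    set g : ℕ → ℕ := fun n => if n < f n then f n else n + 1 with hgdef
    have hg : ∀ n, n < g n := by
      intro n; simp only [hgdef]; split <;> omega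
    have hmap : U.map g = U := by
      have heq : g =ᶠ[(U : Filter ℕ)] f :=
        Filter.eventuallyEq_of_mem hA (fun n hn => by
          simp only [Set.mem_setOf_eq] at hn
          simp only [hgdef, if_pos hn])
      have h2 : U.map g = U.map f := Ultrafilter.coe_injective (by
        rw [Ultrafilter.coe_map, Ultrafilter.coe_map]
        exact Filter.map_congr heq)
      rw [h2, h]
    exact key_lemma U g hmap (cup g) Set.univ Filter.univ_mem
      (fun n _ => cup_flip g hg n)
  · -- descending case
    refine key_lemma U f h (fun n => cdown f n = true) {n | f n < n} hB ?_
    intro n hn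
    simp only [Set.mem_setOf_eq] at hn
    show ¬(cdown f (f n) = true ↔ cdown f n = true)
    rw [cdown_flip f hn]
    simp
end

section
/- Let P and Q be commuting orthogonal projections on a Hilbert space with ranges A and B (closed subspaces). Then (A ⊓ B) ⊔ (A ⊓ B^⊥) = A. -/
/-- If `P` and `Q` are commuting orthogonal projections on a Hilbert space with
ranges `A` and `B`, then `(A ⊓ B) ⊔ (A ⊓ B^⊥) = A` (join being the closure of the
sum). -/
theorem commuting_projections_distributive_core
    {𝕜 : Type*} [RCLike 𝕜] {H : Type*} [NormedAddCommGroup H]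
    [InnerProductSpace 𝕜 H] [CompleteSpace H]
    (P Q : H →L[𝕜] H)
    (hPidem : IsIdempotentElem P) (hQidem : IsIdempotentElem Q)
    (hPsa : IsSelfAdjoint P) (hQsa : IsSelfAdjoint Q)
    (hcomm : P * Q = Q * P)
    (A B : Submodule 𝕜 H)
    (hA : A = LinearMap.range (P : H →ₗ[𝕜] H))
    (hB : B = LinearMap.range (Q : H →ₗ[𝕜] H)) :
    ((A ⊓ B) ⊔ (A ⊓ Bᗮ)).topologicalClosure = A := by
  -- membership in A/B characterized by fixed points
  have hAmem : ∀ x, x ∈ A ↔ P x = x := by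
    intro x
    constructor
    · rintro hx
      rw [hA] at hx
      obtain ⟨y, rfl⟩ := hx
      have := congrFun (congrArg DFunLike.coe hPidem) y
      simpa using this
    · intro hx
      rw [hA]
      exact ⟨x, hx⟩
  have hBmem : ∀ x, x ∈ B ↔ Q x = x := by
    intro x
    constructor
    · rintro hx
      rw [hB] at hx
      obtain ⟨y, rfl⟩ := hx
      have := congrFun (congrArg DFunLike.coe hQidem) y
      simpa using this
    · intro hx
      rw [hB]
      exact ⟨x, hx⟩
  have hsup : (A ⊓ B) ⊔ (A ⊓ Bᗮ) = A := by
    apply le_antisymm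
    · exact sup_le inf_le_left inf_le_left
    · intro x hx
      have hPx : P x = x := (hAmem x).mp hx
      have h1 : Q x ∈ A ⊓ B := by
        refine Submodule.mem_inf.mpr ⟨?_, ?_⟩
        · rw [hAmem]
          have := congrFun (congrArg DFunLike.coe hcomm) x
          simp only [ContinuousLinearMap.mul_apply] at this
          rw [this, hPx]
        · rw [hBmem]
          have := congrFun (congrArg DFunLike.coe hQidem) x
          simpa using this
      have h2 : x - Q x ∈ A ⊓ Bᗮ := by
        refine Submodule.mem_inf.mpr ⟨?_, ?_⟩
        · rw [hAmem]
          have hc := congrFun (congrArg DFunLike.coe hcomm) x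
          simp only [ContinuousLinearMap.mul_apply] at hc
          rw [map_sub, hc, hPx]
        · rw [Submodule.mem_orthogonal]
          rintro u hu
          have hQu : Q u = u := (hBmem u).mp hu
          have hadj : ∀ y z : H, inner 𝕜 (Q y) z = inner 𝕜 y (Q z) := by
            intro y z
            conv_lhs => rw [← hQsa.adjoint_eq]
            exact ContinuousLinearMap.adjoint_inner_left Q z y
          calc inner 𝕜 u (x - Q x) = inner 𝕜 (Q u) (x - Q x) := by rw [hQu]
            _ = inner 𝕜 u (Q (x - Q x)) := hadj u (x - Q x)
            _ = 0 := by
                have := congrFun (congrArg DFunLike.coe hQidem) x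
                simp only [ContinuousLinearMap.mul_apply] at this
                rw [map_sub, this, sub_self, inner_zero_right]
      have : x = Q x + (x - Q x) := by abel
      rw [this]
      exact Submodule.add_mem_sup h1 h2
  rw [hsup]
  apply IsClosed.submodule_topologicalClosure_eq
  have : (A : Set H) = LinearMap.ker ((1 - P : H →L[𝕜] H) : H →ₗ[𝕜] H) := by
    ext x
    simp only [SetLike.mem_coe, LinearMap.mem_ker, ContinuousLinearMap.coe_sub,
      ContinuousLinearMap.one_apply, ContinuousLinearMap.sub_apply, LinearMap.sub_apply,
      ContinuousLinearMap.coe_coe, ContinuousLinearMap.coe_one, LinearMap.id_apply, Module.End.one_apply, hAmem]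
    constructor
    · intro h; rw [h, sub_self]
    · intro h; exact (sub_eq_zero.mp h).symm
  rw [this]
  exact ContinuousLinearMap.isClosed_ker _
end
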